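/- Let n ≥ 1 and let D be a nonzero real diagonal n×n matrix with tr(D) = 0. For any Σ₁, Σ₂ ∈ S⁺⁺ⁿ with det(Σ₁) = det(Σ₂), there exists T > 0 such that Σ₂ ∈ R(Σ₁, D, T), i.e., Σ₂ is reachable from Σ₁ under isospectral control with spectrum D in some finite time. -/

import Mathlib

/-!
Write `D = diag d`. By a matrix geometric mean, `Σ₂ = P Σ₁ P` for a positive definite `P`, and
`det P = 1` because `det Σ₁ = det Σ₂`; so `P = V diag(exp μ) Vᵀ` with `V` orthogonal and
`∑ μ = 0`. Since `∑ d = 0` and `d` is not constant, the permuted copies `d ∘ σ` generate the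
hyperplane `{∑ = 0}` as a convex cone: `μ = ∑ c_σ (d ∘ σ)` with `c_σ ≥ 0`. The constant control
`U = V P_σ` gives `A = V diag(d ∘ σ) Vᵀ` and moves `Σ` to `e^{tA} Σ e^{tA}`; these `A` commute, so
running them one after the other for the times `c_σ` moves `Σ₁` to
`exp(V diag μ Vᵀ) Σ₁ exp(V diag μ Vᵀ) = P Σ₁ P = Σ₂`.
-/

open MeasureTheory Matrix

/-- The entries of `v` sorted in decreasing order. -/
noncomputable def sortDesc {n : ℕ} (v : Fin n → ℝ) : Fin n → ℝ :=
  fun i => v (Tuple.sort v i.rev)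

/-- `x` is majorized by `y`. -/
def IsMajorizedBy {n : ℕ} (x y : Fin n → ℝ) : Prop :=
  (∑ i, x i = ∑ i, y i) ∧
  ∀ k : ℕ, k < n →
    ∑ i ∈ Finset.univ.filter (fun i : Fin n => (i : ℕ) < k), sortDesc x i ≤
    ∑ i ∈ Finset.univ.filter (fun i : Fin n => (i : ℕ) < k), sortDesc y i

/-- `ΣT` is reachable from `Σ₀` under isospectral control with spectrum `D` in time `T`. -/
noncomputable def IsReachable {n : ℕ} (P₀ PT D : Matrix (Fin n) (Fin n) ℝ) (T : ℝ) : Prop :=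
  ∃ U S : ℝ → Matrix (Fin n) (Fin n) ℝ,
    (∀ i j, Measurable fun t => U t i j) ∧
    (∀ t ∈ Set.Icc (0:ℝ) T, U t * (U t)ᵀ = 1) ∧
    (∀ t ∈ Set.Icc (0:ℝ) T, (S t).PosDef) ∧
    S 0 = P₀ ∧ S T = PT ∧
    (∀ i j, IntervalIntegrable
        (fun t => ((U t * D * (U t)ᵀ) * S t + S t * (U t * D * (U t)ᵀ)) i j)
        MeasureTheory.volume 0 T) ∧
    (∀ t ∈ Set.Icc (0:ℝ) T, ∀ i j,
      S t i j = P₀ i j +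
        ∫ s in (0:ℝ)..t, ((U s * D * (U s)ᵀ) * S s + S s * (U s * D * (U s)ᵀ)) i j)

theorem Equiv.Perm.exists_apply_eq_and_apply_eq {α : Type*} [DecidableEq α] {i j a b : α}
    (hij : i ≠ j) (hab : a ≠ b) : ∃ σ : Equiv.Perm α, σ i = a ∧ σ j = b := by
  refine ⟨(Equiv.swap i a).trans (Equiv.swap (Equiv.swap i a j) b), ?_, ?_⟩
  · have : Equiv.swap i a j ≠ a := fun h =>
      hij ((Equiv.swap i a).injective (h.trans (Equiv.swap_apply_left i a).symm)).symm
    simp [Equiv.swap_apply_of_ne_of_ne this.symm hab]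
  · simp

theorem exists_ne_of_sum_eq_zero {ι : Type*} [Fintype ι] {d : ι → ℝ} (hd : ∑ i, d i = 0)
    (h0 : d ≠ 0) : ∃ a b, d a ≠ d b := by
  obtain ⟨a, ha⟩ := Function.ne_iff.mp h0
  have : Nonempty ι := ⟨a⟩
  by_contra! hconst
  have hcard : (Fintype.card ι : ℝ) * d a = 0 := by
    simpa [fun i => hconst i a] using hd
  exact ha ((mul_eq_zero.mp hcard).resolve_left (Nat.cast_ne_zero.mpr Fintype.card_ne_zero))

section PermOrbit

def permOrbit {ι : Type*} (d : ι → ℝ) : Set (ι → ℝ) :=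
  Set.range fun σ : Equiv.Perm ι => d ∘ σ

theorem comp_perm_mem_permOrbit {ι : Type*} (d : ι → ℝ) (σ : Equiv.Perm ι) :
    d ∘ σ ∈ permOrbit d :=
  ⟨σ, rfl⟩

variable {ι : Type*} [DecidableEq ι] {d : ι → ℝ}

theorem single_sub_single_mem_span_permOrbit {a b i j : ι} (hab : d a ≠ d b) (hij : i ≠ j) :
    Pi.single i 1 - Pi.single j 1 ∈ Submodule.span ℝ (permOrbit d) := by
  obtain ⟨σ, hσi, hσj⟩ := Equiv.Perm.exists_apply_eq_and_apply_eq hij fun h => hab (congrArg d h)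
  have key : d ∘ σ - d ∘ (Equiv.swap i j).trans σ =
      (d a - d b) • (Pi.single i 1 - Pi.single j 1) := by
    funext x
    rcases eq_or_ne x i with rfl | hxi
    · simp [hσi, hσj, hij]
    rcases eq_or_ne x j with rfl | hxj
    · simp [hσi, hσj, hij.symm]
    · simp [Equiv.swap_apply_of_ne_of_ne hxi hxj, hxi, hxj]
  have hmem : (d a - d b)⁻¹ • (d ∘ σ - d ∘ (Equiv.swap i j).trans σ) ∈
      Submodule.span ℝ (permOrbit d) :=
    Submodule.smul_mem _ _ <| Submodule.sub_mem _
      (Submodule.subset_span (comp_perm_mem_permOrbit d _))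
      (Submodule.subset_span (comp_perm_mem_permOrbit d _))
  rwa [key, inv_smul_smul₀ (sub_ne_zero.mpr hab)] at hmem

theorem mem_span_permOrbit_of_sum_eq_zero [Fintype ι] {a b : ι} (hab : d a ≠ d b) {μ : ι → ℝ}
    (hμ : ∑ i, μ i = 0) : μ ∈ Submodule.span ℝ (permOrbit d) := by
  have hsum : μ = ∑ i, μ i • (Pi.single i 1 - Pi.single a 1 : ι → ℝ) := by
    simp only [smul_sub, Finset.sum_sub_distrib, ← Finset.sum_smul, hμ, zero_smul, sub_zero,
      ← pi_eq_sum_univ' μ]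
  rw [hsum]
  refine Submodule.sum_mem _ fun i _ => Submodule.smul_mem _ _ ?_
  rcases eq_or_ne i a with rfl | hia
  · simp
  · exact single_sub_single_mem_span_permOrbit hab hia

end PermOrbit

section PermOrbitFin

variable {n : ℕ} {d : Fin n → ℝ}

theorem neg_comp_perm_mem_hull_permOrbit [NeZero n] (hd : ∑ i, d i = 0)
    (π : Equiv.Perm (Fin n)) : -(d ∘ π) ∈ PointedCone.hull ℝ (permOrbit d) := by
  have hrot : ∑ k, d ∘ (π.trans (Equiv.addRight k)) = 0 := by
    funext j
    simpa [Finset.sum_apply, add_comm] using (Equiv.sum_comp (Equiv.addLeft (π j)) d).trans hd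
  rw [← Finset.add_sum_erase _ _ (Finset.mem_univ 0),
    show π.trans (Equiv.addRight 0) = π by ext; simp] at hrot
  rw [← eq_neg_of_add_eq_zero_right hrot]
  exact sum_mem fun k _ => PointedCone.subset_hull (comp_perm_mem_permOrbit d _)

theorem mem_hull_permOrbit_of_sum_eq_zero (hd : ∑ i, d i = 0) {a b : Fin n} (hab : d a ≠ d b)
    {μ : Fin n → ℝ} (hμ : ∑ i, μ i = 0) : μ ∈ PointedCone.hull ℝ (permOrbit d) := by
  have : NeZero n := NeZero.of_pos a.pos
  have hspan : Submodule.span ℝ (permOrbit d) ≤ (PointedCone.hull ℝ (permOrbit d)).lineal :=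
    Submodule.span_le.mpr <| Set.range_subset_iff.mpr fun σ => PointedCone.mem_lineal.mpr
      ⟨PointedCone.subset_hull (comp_perm_mem_permOrbit d σ), neg_comp_perm_mem_hull_permOrbit hd σ⟩
  exact PointedCone.lineal_le _ (hspan (mem_span_permOrbit_of_sum_eq_zero hab hμ))

theorem exists_nonneg_sum_smul_comp_perm_eq (hd : ∑ i, d i = 0) {a b : Fin n}
    (hab : d a ≠ d b) {μ : Fin n → ℝ} (hμ : ∑ i, μ i = 0) :
    ∃ c : Equiv.Perm (Fin n) → ℝ, (∀ σ, 0 ≤ c σ) ∧ 0 < ∑ σ, c σ ∧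
      ∑ σ, c σ • (d ∘ σ) = μ := by
  have hμd : ∑ i, (μ - d) i = 0 := by simp [Finset.sum_sub_distrib, hμ, hd]
  obtain ⟨c, hc⟩ := (Submodule.mem_span_range_iff_exists_fun _).mp
    (mem_hull_permOrbit_of_sum_eq_zero hd hab hμd)
  -- the extra unit of weight on `σ = 1` makes the total time positive
  refine ⟨fun σ => c σ + if σ = 1 then 1 else 0,
    fun σ => add_nonneg (c σ).2 (ite_nonneg zero_le_one le_rfl), ?_, ?_⟩
  · simp only [Finset.sum_add_distrib, Finset.sum_ite_eq', Finset.mem_univ, if_true]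
    exact add_pos_of_nonneg_of_pos (Finset.sum_nonneg fun σ _ => (c σ).2) one_pos
  · simp [add_smul, Finset.sum_add_distrib, hc]

end PermOrbitFin

section MatrixFacts

variable {m : Type*} [Fintype m]

theorem Matrix.IsSymm.mul_mul_transpose {α : Type*} [CommSemiring α] {D : Matrix m m α}
    (hD : D.IsSymm) (W : Matrix m m α) : (W * D * Wᵀ).IsSymm := by
  simp [IsSymm, transpose_mul, hD.eq, mul_assoc]

variable [DecidableEq m]

open scoped MatrixOrder ComplexOrder in
theorem Matrix.PosDef.exists_posDef_mul_mul_eq {𝕜 : Type*} [RCLike 𝕜] {A B : Matrix m m 𝕜}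
    (hA : A.PosDef) (hB : B.PosDef) : ∃ P : Matrix m m 𝕜, P.PosDef ∧ P * A * P = B := by
  set S := CFC.sqrt A
  have hS : S.PosDef := hA.isStrictlyPositive.sqrt.posDef
  have hSS : S * S = A := CFC.sqrt_mul_sqrt_self A hA.posSemidef.nonneg
  have hSB : (S * B * S).PosDef := by
    simpa [star_eq_conjTranspose, hS.isHermitian.eq] using
      (IsUnit.posDef_star_right_conjugate_iff hS.isUnit).mpr hB
  set R := CFC.sqrt (S * B * S)
  have hRR : R * R = S * B * S := CFC.sqrt_mul_sqrt_self _ hSB.posSemidef.nonneg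
  have hSdet : IsUnit S.det := (isUnit_iff_isUnit_det S).mp hS.isUnit
  have hSinv : S⁻¹ * S = 1 := nonsing_inv_mul S hSdet
  have hSinv' : S * S⁻¹ = 1 := mul_nonsing_inv S hSdet
  refine ⟨S⁻¹ * R * S⁻¹, ?_, ?_⟩
  · simpa [star_eq_conjTranspose, hS.inv.isHermitian.eq] using
      (IsUnit.posDef_star_right_conjugate_iff hS.inv.isUnit).mpr hSB.isStrictlyPositive.sqrt.posDef
  · calc S⁻¹ * R * S⁻¹ * A * (S⁻¹ * R * S⁻¹)
        = S⁻¹ * R * (S⁻¹ * S) * (S * S⁻¹) * R * S⁻¹ := by rw [← hSS]; noncomm_ring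
      _ = S⁻¹ * (R * R) * S⁻¹ := by rw [hSinv, hSinv']; noncomm_ring
      _ = (S⁻¹ * S) * B * (S * S⁻¹) := by rw [hRR]; noncomm_ring
      _ = B := by rw [hSinv, hSinv', one_mul, mul_one]

theorem Matrix.PosDef.exists_orthogonal_diagonal_exp {P : Matrix m m ℝ} (hP : P.PosDef) :
    ∃ (V : Matrix m m ℝ) (μ : m → ℝ), V * Vᵀ = 1 ∧
      P = V * diagonal (Real.exp ∘ μ) * Vᵀ ∧ ∑ i, μ i = Real.log P.det := by
  set V : Matrix m m ℝ := (hP.isHermitian.eigenvectorUnitary : Matrix m m ℝ)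
  have hVt : star V = Vᵀ := by simp [star_eq_conjTranspose]
  have hexp : Real.exp ∘ (Real.log ∘ hP.isHermitian.eigenvalues) = hP.isHermitian.eigenvalues :=
    funext fun i => Real.exp_log (hP.eigenvalues_pos i)
  refine ⟨V, Real.log ∘ hP.isHermitian.eigenvalues, ?_, ?_, ?_⟩
  · rw [← hVt]
    exact mem_unitaryGroup_iff.mp hP.isHermitian.eigenvectorUnitary.2
  · rw [hexp, ← hVt]
    simpa [Unitary.conjStarAlgAut_apply] using hP.isHermitian.spectral_theorem
  · rw [hP.isHermitian.det_eq_prod_eigenvalues]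
    simp only [RCLike.ofReal_real_eq_id, id_eq, Function.comp_apply]
    exact (Real.log_prod fun i _ => (hP.eigenvalues_pos i).ne').symm

theorem Commute.mul_mul_transpose {α : Type*} [CommRing α] {X Y V : Matrix m m α}
    (h : Commute X Y) (hV : Vᵀ * V = 1) : Commute (V * X * Vᵀ) (V * Y * Vᵀ) :=
  calc V * X * Vᵀ * (V * Y * Vᵀ)
      = V * (X * (Vᵀ * V) * Y) * Vᵀ := by noncomm_ring
    _ = V * (Y * (Vᵀ * V) * X) * Vᵀ := by rw [hV, mul_one, mul_one, h.eq]
    _ = V * Y * Vᵀ * (V * X * Vᵀ) := by noncomm_ring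

theorem Equiv.Perm.permMatrix_mul_transpose {R : Type*} [NonAssocSemiring R]
    (σ : Equiv.Perm m) : σ.permMatrix R * (σ.permMatrix R)ᵀ = 1 := by
  rw [transpose_permMatrix, ← permMatrix_mul, inv_mul_cancel, permMatrix_one]

theorem Equiv.Perm.permMatrix_mul_diagonal_mul_transpose {R : Type*} [NonAssocSemiring R]
    (σ : Equiv.Perm m) (d : m → R) :
    σ.permMatrix R * diagonal d * (σ.permMatrix R)ᵀ = diagonal (d ∘ σ) := by
  rw [Equiv.Perm.permMatrix, transpose_permMatrix, Equiv.Perm.permMatrix,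
    PEquiv.toMatrix_toPEquiv_mul, PEquiv.mul_toMatrix_toPEquiv, Equiv.Perm.inv_def,
    Equiv.symm_symm, submatrix_submatrix, Function.comp_id, Function.id_comp,
    submatrix_diagonal_equiv]

open NormedSpace

theorem Matrix.PosDef.exp_mul_mul_exp {A S : Matrix m m ℝ} (hA : A.IsSymm) (hS : S.PosDef) :
    (exp A * S * exp A).PosDef := by
  have hE : star (exp A) = exp A := by
    rw [star_eq_conjTranspose, conjTranspose_eq_transpose_of_trivial, ← exp_transpose, hA.eq]
  simpa [hE] using (IsUnit.posDef_star_right_conjugate_iff (isUnit_exp A)).mpr hS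

theorem Matrix.exp_mul_diagonal_mul_transpose {V : Matrix m m ℝ} (hV : V * Vᵀ = 1)
    (x : m → ℝ) : exp (V * diagonal x * Vᵀ) = V * diagonal (Real.exp ∘ x) * Vᵀ := by
  rw [← inv_eq_right_inv hV, exp_conj _ _ ⟨⟨V, Vᵀ, hV, mul_eq_one_comm.mp hV⟩, rfl⟩,
    exp_diagonal, Real.exp_eq_exp_ℝ, Pi.exp_def]
  rfl

end MatrixFacts

section Concatenation

variable {α : Type*}

noncomputable def concatAt (T₁ : ℝ) (f₁ f₂ : ℝ → α) : ℝ → α :=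
  fun t => if t ≤ T₁ then f₁ t else f₂ (t - T₁)

variable {T₁ : ℝ} {f₁ f₂ : ℝ → α}

theorem concatAt_of_le {t : ℝ} (ht : t ≤ T₁) : concatAt T₁ f₁ f₂ t = f₁ t := if_pos ht

theorem concatAt_of_lt {t : ℝ} (ht : T₁ < t) : concatAt T₁ f₁ f₂ t = f₂ (t - T₁) :=
  if_neg ht.not_ge

theorem apply_concatAt {β : Type*} (F : α → β) :
    (fun t => F (concatAt T₁ f₁ f₂ t)) = concatAt T₁ (fun t => F (f₁ t)) (fun t => F (f₂ t)) :=
  funext fun _ => apply_ite F _ _ _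

theorem concatAt_apply₂ {β γ : Type*} (F : α → β → γ) (g₁ g₂ : ℝ → β) :
    (fun t => F (concatAt T₁ f₁ f₂ t) (concatAt T₁ g₁ g₂ t)) =
      concatAt T₁ (fun t => F (f₁ t) (g₁ t)) (fun t => F (f₂ t) (g₂ t)) :=
  funext fun _ => apply_ite₂ F _ _ _ _ _

theorem Measurable.concatAt [MeasurableSpace α] (h₁ : Measurable f₁) (h₂ : Measurable f₂) :
    Measurable (concatAt T₁ f₁ f₂) :=
  Measurable.ite measurableSet_Iic h₁ (h₂.comp (measurable_id.sub_const T₁))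

end Concatenation

section ConcatenationIntegral

variable {T₁ T₂ : ℝ} {f₁ f₂ : ℝ → ℝ}

theorem intervalIntegrable_concatAt_left (hT₁ : 0 ≤ T₁)
    (h₁ : IntervalIntegrable f₁ volume 0 T₁) :
    IntervalIntegrable (concatAt T₁ f₁ f₂) volume 0 T₁ :=
  (intervalIntegrable_congr fun _ ht => (concatAt_of_le (Set.uIoc_of_le hT₁ ▸ ht).2).symm).mp h₁

theorem intervalIntegrable_concatAt_right (hT₂ : 0 ≤ T₂)
    (h₂ : IntervalIntegrable f₂ volume 0 T₂) :
    IntervalIntegrable (concatAt T₁ f₁ f₂) volume T₁ (T₁ + T₂) := by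
  have h := h₂.comp_sub_right T₁
  rw [zero_add, add_comm] at h
  refine (intervalIntegrable_congr fun _ ht => ?_).mp h
  exact (concatAt_of_lt (Set.uIoc_of_le (le_add_of_nonneg_right hT₂) ▸ ht).1).symm

theorem intervalIntegrable_concatAt (hT₁ : 0 ≤ T₁) (hT₂ : 0 ≤ T₂)
    (h₁ : IntervalIntegrable f₁ volume 0 T₁) (h₂ : IntervalIntegrable f₂ volume 0 T₂) :
    IntervalIntegrable (concatAt T₁ f₁ f₂) volume 0 (T₁ + T₂) :=
  (intervalIntegrable_concatAt_left hT₁ h₁).trans (intervalIntegrable_concatAt_right hT₂ h₂)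

theorem integral_concatAt_of_le {t : ℝ} (ht : t ∈ Set.Icc 0 T₁) :
    ∫ s in (0 : ℝ)..t, concatAt T₁ f₁ f₂ s = ∫ s in (0 : ℝ)..t, f₁ s :=
  intervalIntegral.integral_congr fun _ hs =>
    concatAt_of_le ((Set.uIcc_of_le ht.1 ▸ hs).2.trans ht.2)

theorem integral_concatAt_of_ge {t : ℝ} (ht : T₁ ≤ t) :
    ∫ s in T₁..t, concatAt T₁ f₁ f₂ s = ∫ s in (0 : ℝ)..(t - T₁), f₂ s := by
  rw [← sub_self T₁, ← intervalIntegral.integral_comp_sub_right]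
  exact intervalIntegral.integral_congr_ae <| Filter.Eventually.of_forall fun _ hs =>
    concatAt_of_lt (Set.uIoc_of_le ht ▸ hs).1

theorem concatAt_eq_add_integral {y₁ y₂ : ℝ → ℝ} {y₀ : ℝ} (hT₁ : 0 ≤ T₁) (hT₂ : 0 ≤ T₂)
    (hf₁ : IntervalIntegrable f₁ volume 0 T₁) (hf₂ : IntervalIntegrable f₂ volume 0 T₂)
    (hy₁ : ∀ t ∈ Set.Icc 0 T₁, y₁ t = y₀ + ∫ s in (0 : ℝ)..t, f₁ s)
    (hy₂ : ∀ t ∈ Set.Icc 0 T₂, y₂ t = y₁ T₁ + ∫ s in (0 : ℝ)..t, f₂ s)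
    {t : ℝ} (ht : t ∈ Set.Icc 0 (T₁ + T₂)) :
    concatAt T₁ y₁ y₂ t = y₀ + ∫ s in (0 : ℝ)..t, concatAt T₁ f₁ f₂ s := by
  rcases le_or_gt t T₁ with h | h
  · rw [concatAt_of_le h, integral_concatAt_of_le ⟨ht.1, h⟩, hy₁ t ⟨ht.1, h⟩]
  have ht₂ : t - T₁ ∈ Set.Icc 0 T₂ := ⟨by linarith, by linarith [ht.2]⟩
  have hf₂' := intervalIntegrable_concatAt_right (T₁ := T₁) (f₁ := f₁) ht₂.1
    (hf₂.mono_set (Set.uIcc_subset_uIcc_left (Set.uIcc_of_le hT₂ ▸ ht₂)))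
  rw [add_sub_cancel] at hf₂'
  rw [concatAt_of_lt h, ← intervalIntegral.integral_add_adjacent_intervals
    (intervalIntegrable_concatAt_left hT₁ hf₁) hf₂', integral_concatAt_of_le ⟨hT₁, le_rfl⟩,
    integral_concatAt_of_ge h.le, hy₂ _ ht₂, hy₁ T₁ ⟨hT₁, le_rfl⟩, add_assoc]

end ConcatenationIntegral

section Reachability

open NormedSpace

variable {n : ℕ}

theorem hasDerivAt_exp_smul_mul_mul_exp_smul_apply (A S₀ : Matrix (Fin n) (Fin n) ℝ)
    (i j : Fin n) (t : ℝ) :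
    HasDerivAt (fun u => (exp (u • A) * S₀ * exp (u • A)) i j)
      ((A * (exp (t • A) * S₀ * exp (t • A)) + exp (t • A) * S₀ * exp (t • A) * A) i j) t := by
  let _ : NormedRing (Matrix (Fin n) (Fin n) ℝ) := Matrix.linftyOpNormedRing
  let _ : NormedAlgebra ℝ (Matrix (Fin n) (Fin n) ℝ) := Matrix.linftyOpNormedAlgebra
  have hS := ((hasDerivAt_exp_smul_const' (𝕂 := ℝ) A t).mul_const S₀).mul
    (hasDerivAt_exp_smul_const (𝕂 := ℝ) A t)
  have hS' : HasDerivAt (fun u => exp (u • A) * S₀ * exp (u • A))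
      (A * (exp (t • A) * S₀ * exp (t • A)) + exp (t • A) * S₀ * exp (t • A) * A) t :=
    hS.congr_deriv (by noncomm_ring)
  exact (LinearMap.toContinuousLinearMap (entryLinearMap ℝ ℝ i j)).hasFDerivAt.comp_hasDerivAt
    t hS'

theorem isReachable_exp_smul_mul_mul_exp_smul {D W S₀ : Matrix (Fin n) (Fin n) ℝ}
    (hD : D.IsSymm) (hW : W * Wᵀ = 1) (hS₀ : S₀.PosDef) (τ : ℝ) :
    IsReachable S₀ (exp (τ • (W * D * Wᵀ)) * S₀ * exp (τ • (W * D * Wᵀ))) D τ := by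
  set A := W * D * Wᵀ
  set S : ℝ → Matrix (Fin n) (Fin n) ℝ := fun u => exp (u • A) * S₀ * exp (u • A)
  have hderiv (i j : Fin n) (t : ℝ) :
      HasDerivAt (fun u => S u i j) ((A * S t + S t * A) i j) t :=
    hasDerivAt_exp_smul_mul_mul_exp_smul_apply A S₀ i j t
  have hcont : Continuous fun u => A * S u + S u * A := by
    have hS : Continuous S := continuous_pi fun i => continuous_pi fun j =>
      continuous_iff_continuousAt.mpr fun t => (hderiv i j t).continuousAt
    exact (continuous_const.matrix_mul hS).add (hS.matrix_mul continuous_const)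
  refine ⟨fun _ => W, S, fun _ _ => measurable_const, fun _ _ => hW,
    fun t _ => hS₀.exp_mul_mul_exp ((hD.mul_mul_transpose W).smul t), by simp [S, exp_zero], rfl,
    fun i j => (hcont.matrix_elem i j).intervalIntegrable _ _, fun t _ i j => ?_⟩
  rw [intervalIntegral.integral_eq_sub_of_hasDerivAt (fun u _ => hderiv i j u)
    ((hcont.matrix_elem i j).intervalIntegrable _ _)]
  simp [S, exp_zero]

theorem isReachable_refl {D S₀ : Matrix (Fin n) (Fin n) ℝ} (hD : D.IsSymm) (hS₀ : S₀.PosDef) :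
    IsReachable S₀ S₀ D 0 := by
  simpa [exp_zero] using isReachable_exp_smul_mul_mul_exp_smul hD (W := 1) (by simp) hS₀ 0

theorem IsReachable.trans {P₀ P₁ P₂ D : Matrix (Fin n) (Fin n) ℝ} {T₁ T₂ : ℝ}
    (hT₁ : 0 ≤ T₁) (hT₂ : 0 ≤ T₂) (h₁ : IsReachable P₀ P₁ D T₁) (h₂ : IsReachable P₁ P₂ D T₂) :
    IsReachable P₀ P₂ D (T₁ + T₂) := by
  obtain ⟨U₁, S₁, hU₁m, hU₁, hS₁, hS₁0, hS₁T, hint₁, hS₁eq⟩ := h₁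
  obtain ⟨U₂, S₂, hU₂m, hU₂, hS₂, hS₂0, hS₂T, hint₂, hS₂eq⟩ := h₂
  have hrate (i j : Fin n) := concatAt_apply₂ (T₁ := T₁) (f₁ := U₁) (f₂ := U₂)
    (fun U S => (U * D * Uᵀ * S + S * (U * D * Uᵀ)) i j) S₁ S₂
  have hentry (i j : Fin n) := apply_concatAt (T₁ := T₁) (f₁ := S₁) (f₂ := S₂)
    (fun A : Matrix (Fin n) (Fin n) ℝ => A i j)
  refine ⟨concatAt T₁ U₁ U₂, concatAt T₁ S₁ S₂, fun i j => ?_, fun t ht => ?_, fun t ht => ?_,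
    ?_, ?_, fun i j => ?_, fun t ht i j => ?_⟩
  · rw [apply_concatAt (fun A : Matrix (Fin n) (Fin n) ℝ => A i j)]
    exact (hU₁m i j).concatAt (hU₂m i j)
  · rcases le_or_gt t T₁ with h | h
    · rw [concatAt_of_le h]; exact hU₁ t ⟨ht.1, h⟩
    · rw [concatAt_of_lt h]; exact hU₂ _ ⟨by linarith, by linarith [ht.2]⟩
  · rcases le_or_gt t T₁ with h | h
    · rw [concatAt_of_le h]; exact hS₁ t ⟨ht.1, h⟩
    · rw [concatAt_of_lt h]; exact hS₂ _ ⟨by linarith, by linarith [ht.2]⟩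
  · rw [concatAt_of_le hT₁, hS₁0]
  · rcases hT₂.eq_or_lt with h | h
    · rw [← h, add_zero, concatAt_of_le le_rfl, hS₁T, ← hS₂0, h, hS₂T]
    · rw [concatAt_of_lt (by linarith), add_sub_cancel_left, hS₂T]
  · rw [hrate]
    exact intervalIntegrable_concatAt hT₁ hT₂ (hint₁ i j) (hint₂ i j)
  · rw [hrate]
    refine (congrFun (hentry i j) t).trans ?_
    exact concatAt_eq_add_integral hT₁ hT₂ (hint₁ i j) (hint₂ i j) (fun t ht => hS₁eq t ht i j)
      (fun t ht => hS₁T ▸ hS₂eq t ht i j) ht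

theorem isReachable_exp_sum {ι : Type*} [DecidableEq ι] {D : Matrix (Fin n) (Fin n) ℝ}
    (hD : D.IsSymm) {W : ι → Matrix (Fin n) (Fin n) ℝ} {c : ι → ℝ} (s : Finset ι)
    (hW : ∀ i ∈ s, W i * (W i)ᵀ = 1) (hc : ∀ i ∈ s, 0 ≤ c i)
    (hcomm : (s : Set ι).Pairwise fun i j => Commute (W i * D * (W i)ᵀ) (W j * D * (W j)ᵀ))
    {S₀ : Matrix (Fin n) (Fin n) ℝ} (hS₀ : S₀.PosDef) :
    IsReachable S₀ (exp (∑ i ∈ s, c i • (W i * D * (W i)ᵀ)) * S₀ *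
      exp (∑ i ∈ s, c i • (W i * D * (W i)ᵀ))) D (∑ i ∈ s, c i) := by
  induction s using Finset.induction_on generalizing S₀ with
  | empty => simpa [exp_zero] using isReachable_refl hD hS₀
  | insert a s ha ih =>
    simp only [Finset.mem_insert, forall_eq_or_imp] at hW hc
    rw [Finset.coe_insert, Set.pairwise_insert] at hcomm
    set A := W a * D * (W a)ᵀ with hA_def
    set B := ∑ i ∈ s, c i • (W i * D * (W i)ᵀ)
    have hAB : Commute (c a • A) B := .smul_left (.sum_right _ _ _ fun i hi =>
      (hcomm.2 i hi (ne_of_mem_of_not_mem hi ha).symm).1.smul_right _) _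
    have hEE : exp (c a • A) * exp B = exp B * exp (c a • A) := by
      rw [← exp_add_of_commute _ _ hAB, ← exp_add_of_commute _ _ hAB.symm, add_comm]
    have h := (isReachable_exp_smul_mul_mul_exp_smul hD hW.1 hS₀ (c a)).trans hc.1
      (Finset.sum_nonneg hc.2)
      (ih hW.2 hc.2 hcomm.1 (hS₀.exp_mul_mul_exp ((hD.mul_mul_transpose _).smul _)))
    rw [← hA_def] at h
    rw [Finset.sum_insert ha, Finset.sum_insert ha, exp_add_of_commute _ _ hAB]
    nth_rewrite 1 [hEE]
    simpa only [mul_assoc] using h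

theorem isReachable_exp_mul_diagonal_mul_transpose {d : Fin n → ℝ} {V : Matrix (Fin n) (Fin n) ℝ}
    (hV : V * Vᵀ = 1) {c : Equiv.Perm (Fin n) → ℝ} (hc : ∀ σ, 0 ≤ c σ)
    {S₀ : Matrix (Fin n) (Fin n) ℝ} (hS₀ : S₀.PosDef) :
    IsReachable S₀
      (V * diagonal (Real.exp ∘ ∑ σ, c σ • (d ∘ σ)) * Vᵀ * S₀ *
        (V * diagonal (Real.exp ∘ ∑ σ, c σ • (d ∘ σ)) * Vᵀ))
      (diagonal d) (∑ σ, c σ) := by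
  have hWD (σ : Equiv.Perm (Fin n)) :
      V * σ.permMatrix ℝ * diagonal d * (V * σ.permMatrix ℝ)ᵀ = V * diagonal (d ∘ σ) * Vᵀ := by
    rw [transpose_mul, ← σ.permMatrix_mul_diagonal_mul_transpose]; noncomm_ring
  have hW (σ : Equiv.Perm (Fin n)) : V * σ.permMatrix ℝ * (V * σ.permMatrix ℝ)ᵀ = 1 := by
    rw [transpose_mul, show V * σ.permMatrix ℝ * ((σ.permMatrix ℝ)ᵀ * Vᵀ) =
      V * (σ.permMatrix ℝ * (σ.permMatrix ℝ)ᵀ) * Vᵀ by noncomm_ring,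
      σ.permMatrix_mul_transpose, mul_one, hV]
  have hB : ∑ σ, c σ • (V * σ.permMatrix ℝ * diagonal d * (V * σ.permMatrix ℝ)ᵀ) =
      V * diagonal (∑ σ, c σ • (d ∘ σ)) * Vᵀ := by
    simp only [hWD]
    rw [← diagonalAddMonoidHom_apply, map_sum, Finset.mul_sum, Finset.sum_mul]
    simp [diagonal_smul]
  have h := isReachable_exp_sum (isDiag_diagonal d).isSymm (W := fun σ => V * σ.permMatrix ℝ)
    (c := c) Finset.univ (fun σ _ => hW σ) (fun σ _ => hc σ)
    (fun σ _ τ _ _ => by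
      simpa only [hWD] using (commute_diagonal _ _).mul_mul_transpose (mul_eq_one_comm.mp hV))
    hS₀
  rwa [hB, exp_mul_diagonal_mul_transpose hV] at h

end Reachability

theorem exists_time_isReachable_of_det_eq_general
    {n : ℕ}
    (D : Matrix (Fin n) (Fin n) ℝ) (hD : D.IsDiag) (hD0 : D ≠ 0)
    (hDtr : D.trace = 0)
    (P₁ P₂ : Matrix (Fin n) (Fin n) ℝ)
    (hP₁ : P₁.PosDef) (hP₂ : P₂.PosDef)
    (hdet : P₁.det = P₂.det) :
    ∃ T : ℝ, 0 < T ∧ IsReachable P₁ P₂ D T := by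
  obtain ⟨P, hP, rfl⟩ := hP₁.exists_posDef_mul_mul_eq hP₂
  have hPdet : P.det = 1 := by
    rw [det_mul, det_mul] at hdet
    have h : P.det ^ 2 * P₁.det = 1 * P₁.det := by linear_combination -hdet
    exact (pow_eq_one_iff_of_nonneg hP.det_pos.le two_ne_zero).mp
      (mul_right_cancel₀ hP₁.det_pos.ne' h)
  obtain ⟨V, μ, hV, rfl, hμ⟩ := hP.exists_orthogonal_diagonal_exp
  rw [hPdet, Real.log_one] at hμ
  have hDd : D = diagonal D.diag := hD.diagonal_diag.symm
  obtain ⟨a, b, hab⟩ := exists_ne_of_sum_eq_zero (d := D.diag) hDtr fun h =>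
    hD0 (by rw [hDd, h]; exact diagonal_zero)
  obtain ⟨c, hc, hT, rfl⟩ := exists_nonneg_sum_smul_comp_perm_eq hDtr hab hμ
  have h := isReachable_exp_mul_diagonal_mul_transpose (d := D.diag) hV hc hP₁
  rw [← hDd] at h
  exact ⟨_, hT, h⟩

/-- Theorem 19, finite-time controllability.
For any nonzero traceless diagonal `D` and any `Σ₁, Σ₂ ∈ S⁺⁺ⁿ` with equal
determinants, there is a finite time `T > 0` with `Σ₂ ∈ R(Σ₁, D, T)`. -/
theorem exists_time_isReachable_of_det_eq
    {n : ℕ} (hn : 1 ≤ n)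
    (D : Matrix (Fin n) (Fin n) ℝ) (hD : D.IsDiag) (hD0 : D ≠ 0)
    (hDtr : D.trace = 0)
    (P₁ P₂ : Matrix (Fin n) (Fin n) ℝ)
    (hP₁ : P₁.PosDef) (hP₂ : P₂.PosDef)
    (hdet : P₁.det = P₂.det) :
    ∃ T : ℝ, 0 < T ∧ IsReachable P₁ P₂ D T :=
  exists_time_isReachable_of_det_eq_general D hD hD0 hDtr P₁ P₂ hP₁ hP₂ hdet
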